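/- arXiv:2410.13219 — 2 statements merged into one kernel-verified Lean document; each statement's English description precedes it below -/
import Mathlib

section
/- (Corollary 1: FIM of the sensing-only parameter vector.) The matrix product J_sᵀ · I_η · J_s equals the 3×3 block matrix, with rows and columns each indexed by (Fin L) ⊕ (Fin L) ⊕ (Fin L), whose blocks are: (1,1) = Hᵀ·Λττ·H, (1,2) = 0, (1,3) = Hᵀ·Λτα, (2,1) = 0, (2,2) = 𝔟·Hᵀ·Λφφ·H where 𝔟 = 2π²·T_f²·N_f·(N_f − 1)·(2N_f − 1)/3, (2,3) = 0, (3,1) = Λατ·H, (3,2) = 0, (3,3) = Λαα. -/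
open Matrix

noncomputable section

/-- The matrix `H`: first column all ones, agreeing with the identity elsewhere. -/
def Hmat (L : ℕ) : Matrix (Fin L) (Fin L) ℂ :=
  Matrix.of fun i j => if j.val = 0 ∨ i = j then 1 else 0

/-- The FIM of the observation vector in the sensing-only case. -/
def Ieta (L Nf : ℕ) (Λττ Λτα Λατ Λφφ Λαα : Matrix (Fin L) (Fin L) ℂ) :
    Matrix (Fin L ⊕ (Fin Nf × Fin L) ⊕ Fin L) (Fin L ⊕ (Fin Nf × Fin L) ⊕ Fin L) ℂ :=
  Matrix.of fun i j =>
    match i, j with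
    | Sum.inl a, Sum.inl b => Λττ a b
    | Sum.inl a, Sum.inr (Sum.inr b) => Λτα a b
    | Sum.inr (Sum.inr a), Sum.inl b => Λατ a b
    | Sum.inr (Sum.inr a), Sum.inr (Sum.inr b) => Λαα a b
    | Sum.inr (Sum.inl (κ, a)), Sum.inr (Sum.inl (κ', b)) => if κ = κ' then Λφφ a b else 0
    | _, _ => 0

/-- The Jacobian matrix of the sensing-only case: block diagonal with blocks `H`, `L_N`, `I_L`. -/
def Js (L Nf : ℕ) (Tf : ℝ) :
    Matrix (Fin L ⊕ (Fin Nf × Fin L) ⊕ Fin L) (Fin L ⊕ Fin L ⊕ Fin L) ℂ :=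
  Matrix.of fun i j =>
    match i, j with
    | Sum.inl a, Sum.inl b => Hmat L a b
    | Sum.inr (Sum.inl (κ, a)), Sum.inr (Sum.inl b) =>
        ((2 * Real.pi * (κ.1 : ℝ) * Tf : ℝ) : ℂ) * Hmat L a b
    | Sum.inr (Sum.inr a), Sum.inr (Sum.inr b) => (1 : Matrix (Fin L) (Fin L) ℂ) a b
    | _, _ => 0


private lemma sumsq_aux (n : ℕ) : ∑ κ : Fin n, ((κ : ℝ))^2 = (n:ℝ)*((n:ℝ)-1)*(2*(n:ℝ)-1)/6 := by
  induction n with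
  | zero => simp
  | succ m ih =>
    rw [Fin.sum_univ_castSucc]
    simp only [Fin.coe_castSucc]
    rw [ih]; push_cast; ring

set_option maxHeartbeats 2000000 in
/-- Corollary 1: the FIM of the sensing-only parameter vector. -/
theorem fim_sensing_only (L Nf : ℕ) (hL : 1 ≤ L) (Tf : ℝ)
    (Λττ Λτα Λατ Λφφ Λαα : Matrix (Fin L) (Fin L) ℂ) :
    (Js L Nf Tf)ᵀ * Ieta L Nf Λττ Λτα Λατ Λφφ Λαα * Js L Nf Tf =
      Matrix.of (fun (i j : Fin L ⊕ Fin L ⊕ Fin L) =>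
        match i, j with
        | Sum.inl a, Sum.inl b => ((Hmat L)ᵀ * Λττ * Hmat L) a b
        | Sum.inl _, Sum.inr (Sum.inl _) => 0
        | Sum.inl a, Sum.inr (Sum.inr b) => ((Hmat L)ᵀ * Λτα) a b
        | Sum.inr (Sum.inl _), Sum.inl _ => 0
        | Sum.inr (Sum.inl a), Sum.inr (Sum.inl b) =>
            ((2 * Real.pi ^ 2 * Tf ^ 2 * (Nf : ℝ) * ((Nf : ℝ) - 1) * (2 * (Nf : ℝ) - 1) / 3 : ℝ) : ℂ) *
              ((Hmat L)ᵀ * Λφφ * Hmat L) a b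
        | Sum.inr (Sum.inl _), Sum.inr (Sum.inr _) => 0
        | Sum.inr (Sum.inr a), Sum.inl b => (Λατ * Hmat L) a b
        | Sum.inr (Sum.inr _), Sum.inr (Sum.inl _) => 0
        | Sum.inr (Sum.inr a), Sum.inr (Sum.inr b) => Λαα a b) := by
  ext i j
  rcases i with a | a | a <;> rcases j with b | b | b
  · simp [Matrix.mul_apply, Fintype.sum_sum_type, Js, Ieta, Fintype.sum_prod_type]
  · simp [Matrix.mul_apply, Fintype.sum_sum_type, Js, Ieta, Fintype.sum_prod_type]
  · simp [Matrix.mul_apply, Fintype.sum_sum_type, Js, Ieta, Fintype.sum_prod_type,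
      Matrix.one_apply, Finset.sum_ite_eq, Finset.sum_ite_eq']
  · simp [Matrix.mul_apply, Fintype.sum_sum_type, Js, Ieta, Fintype.sum_prod_type]
  · simp [Matrix.mul_apply, Fintype.sum_sum_type, Js, Ieta, Fintype.sum_prod_type,
      Finset.mul_sum, Finset.sum_mul, ite_mul, mul_ite]
    have key : (∑ κ : Fin Nf, (((2 * Real.pi * (κ.1 : ℝ) * Tf : ℝ) : ℂ))^2)
        = ((2 * Real.pi ^ 2 * Tf ^ 2 * (Nf : ℝ) * ((Nf : ℝ) - 1) * (2 * (Nf : ℝ) - 1) / 3 : ℝ) : ℂ) := by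
      have h3 : (∑ κ : Fin Nf, (((2 * Real.pi * (κ.1 : ℝ) * Tf : ℝ)))^2)
          = (2 * Real.pi ^ 2 * Tf ^ 2 * (Nf : ℝ) * ((Nf : ℝ) - 1) * (2 * (Nf : ℝ) - 1) / 3 : ℝ) := by
        have h2 := sumsq_aux Nf
        calc ∑ κ : Fin Nf, (2 * Real.pi * (κ.1 : ℝ) * Tf)^2
            = (4 * Real.pi^2 * Tf^2) * ∑ κ : Fin Nf, ((κ.1:ℝ))^2 := by
              rw [Finset.mul_sum]; congr 1 with κ; ring
          _ = _ := by rw [h2]; ring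
      push_cast [← h3]
      ring
    trans (∑ κ : Fin Nf, (((2 * Real.pi * (κ.1 : ℝ) * Tf : ℝ) : ℂ))^2) *
        ∑ x1 : Fin L, ∑ x2 : Fin L, Hmat L x2 a * Λφφ x2 x1 * Hmat L x1 b
    · rw [Finset.sum_mul]; congr 1 with κ; rw [Finset.mul_sum]; congr 1 with x1
      rw [Finset.mul_sum]; congr 1 with x2; push_cast; ring
    · rw [key, Finset.mul_sum]; congr 1 with x; rw [Finset.mul_sum]
      congr 1 with i; push_cast; ring
  · simp [Matrix.mul_apply, Fintype.sum_sum_type, Js, Ieta, Fintype.sum_prod_type]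
  · simp [Matrix.mul_apply, Fintype.sum_sum_type, Js, Ieta, Fintype.sum_prod_type,
      Matrix.one_apply, Finset.sum_ite_eq, Finset.sum_ite_eq']
  · simp [Matrix.mul_apply, Fintype.sum_sum_type, Js, Ieta, Fintype.sum_prod_type]
  · simp [Matrix.mul_apply, Fintype.sum_sum_type, Js, Ieta, Fintype.sum_prod_type,
      Matrix.one_apply, Finset.sum_ite_eq, Finset.sum_ite_eq']
end
end

section
/- (Corollary 1, singularity for a single pulse repetition interval.) If N_f = 1, then every column of J_sᵀ · I_η · J_s indexed by the middle group (the second summand Fin L, corresponding to the Doppler parameters) is zero; in particular, J_sᵀ · I_η · J_s is not an invertible matrix, for every choice of the blocks Λττ, Λτα, Λατ, Λφφ, Λαα. (This reflects that Doppler estimation requires at least two signal transmission periods.) -/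
open Matrix

noncomputable section

/-- Corollary 1, singularity for a single pulse repetition interval: if `N_f = 1`, every column
of `J_sᵀ · I_η · J_s` indexed by the Doppler group vanishes, and the matrix is not invertible,
for every choice of the blocks. -/
theorem fim_sensing_singular_single_PRI (L Nf : ℕ) (hL : 1 ≤ L) (hNf : Nf = 1) (Tf : ℝ)
    (Λττ Λτα Λατ Λφφ Λαα : Matrix (Fin L) (Fin L) ℂ) :
    (∀ (i : Fin L ⊕ Fin L ⊕ Fin L) (j : Fin L),
        ((Js L Nf Tf)ᵀ * Ieta L Nf Λττ Λτα Λατ Λφφ Λαα * Js L Nf Tf) i (Sum.inr (Sum.inl j)) = 0)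
      ∧ ¬ IsUnit ((Js L Nf Tf)ᵀ * Ieta L Nf Λττ Λτα Λατ Λφφ Λαα * Js L Nf Tf) := by
  subst hNf
  have hJ : ∀ (k : Fin L ⊕ (Fin 1 × Fin L) ⊕ Fin L) (j : Fin L),
      Js L 1 Tf k (Sum.inr (Sum.inl j)) = 0 := by
    rintro (a | ⟨⟨κ, a⟩ | a⟩) j <;>
      simp [Js, Fin.val_eq_zero]
  have hcol : ∀ (i : Fin L ⊕ Fin L ⊕ Fin L) (j : Fin L),
      ((Js L 1 Tf)ᵀ * Ieta L 1 Λττ Λτα Λατ Λφφ Λαα * Js L 1 Tf) i (Sum.inr (Sum.inl j)) = 0 := by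
    intro i j
    rw [Matrix.mul_apply]
    exact Finset.sum_eq_zero fun k _ => by rw [hJ k j, mul_zero]
  refine ⟨hcol, fun h => ?_⟩
  have hdet := (Matrix.isUnit_iff_isUnit_det _).mp h
  rw [Matrix.det_eq_zero_of_column_eq_zero (Sum.inr (Sum.inl ⟨0, hL⟩))
    (fun i => hcol i ⟨0, hL⟩)] at hdet
  exact hdet.ne_zero rfl
end
end
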